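/- arXiv:1609.02398 — 2 statements merged into one kernel-verified Lean document; each statement's English description precedes it below -/
import Mathlib

section
/- Let Q be an M×M complex unitary matrix, F a subset of {1,…,M} of size m, Q_F the corresponding M×m submatrix of columns of Q, W an M×M unitary matrix, and set P = W Q_F Q_F^H W^H. Let h be a random vector in ℂ^M with integrable second moments whose correlation matrix is E[h h^H] = Φ. Then E[‖P h − h‖²] = Σ_{ℓ ∉ F} [Q^H W^H Φ W Q]_{ℓℓ}, i.e., the estimator bias equals the sum of the diagonal entries of the bias matrix B̂ = Q^H W^H Φ W Q indexed by the complement of F. -/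
open Matrix MeasureTheory Finset

/-!
The error is `(P - 1) h`, so its mean squared norm is `tr ((P - 1)ᴴ (P - 1) Φ)`. Since
`V = W Q_F` has orthonormal columns, `P = V Vᴴ` is an orthogonal projection and
`(P - 1)ᴴ (P - 1) = 1 - P`, leaving `tr Φ - tr (P Φ)`. With `U = W Q` unitary, cyclicity of the
trace turns `tr Φ` into the full trace of `B̂ = Uᴴ Φ U` and `tr (P Φ) = tr (Vᴴ Φ V)` into the
trace of its `F × F` block, because `V` consists of the columns of `U` indexed by `F`.
-/

theorem IsStarProjection.star_sub_one_mul_sub_one {R : Type*} [Ring R] [StarRing R] {p : R}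
    (hp : IsStarProjection p) : star (p - 1) * (p - 1) = 1 - p := by
  rw [← neg_sub, star_neg, neg_mul_neg, hp.one_sub.isSelfAdjoint.star_eq,
    hp.one_sub.isIdempotentElem.eq]

namespace Matrix

variable {l m n R : Type*}

theorem isStarProjection_mul_conjTranspose_self [Fintype m] [Fintype n] [DecidableEq n]
    [CommSemiring R] [StarRing R] {V : Matrix m n R} (hV : Vᴴ * V = 1) :
    IsStarProjection (V * Vᴴ) where
  isIdempotentElem := by
    rw [IsIdempotentElem, Matrix.mul_assoc, ← Matrix.mul_assoc Vᴴ, hV, Matrix.one_mul]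
  isSelfAdjoint := by
    rw [IsSelfAdjoint, star_eq_conjTranspose, conjTranspose_mul, conjTranspose_conjTranspose]

theorem trace_conjTranspose_mul_mul_of_mul_conjTranspose_eq_one [Fintype m] [Fintype n]
    [DecidableEq m] [CommSemiring R] [StarRing R] {U : Matrix m n R} (hU : U * Uᴴ = 1)
    (X : Matrix m m R) :
    trace (Uᴴ * X * U) = trace X := by
  rw [trace_mul_cycle, hU, Matrix.one_mul]

theorem submatrix_conjTranspose_mul_mul [Fintype m] [Fintype n] [CommSemiring R] [StarRing R]
    (U : Matrix m n R) (X : Matrix m m R) (f : l → n) :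
    (Uᴴ * X * U).submatrix f f = (U.submatrix id f)ᴴ * X * U.submatrix id f := by
  rw [submatrix_mul _ _ f id f Function.bijective_id,
    submatrix_mul _ _ f id id Function.bijective_id, conjTranspose_submatrix, submatrix_id_id]

theorem trace_sub_trace_submatrix_val [Fintype n] [DecidableEq n] [AddCommGroup R]
    (A : Matrix n n R) (s : Finset n) :
    trace A - trace (A.submatrix (↑) (↑) : Matrix s s R) = ∑ i ∈ sᶜ, A i i := by
  rw [sub_eq_iff_eq_add, trace, ← sum_compl_add_sum s, trace, ← Finset.sum_coe_sort s]
  rfl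

theorem ofReal_sum_norm_sq_eq_star_dotProduct {𝕜 : Type*} [RCLike 𝕜] [Fintype n] (v : n → 𝕜) :
    ((∑ i, ‖v i‖ ^ 2 : ℝ) : 𝕜) = star v ⬝ᵥ v := by
  simp [dotProduct, RCLike.conj_mul]

theorem star_dotProduct_conjTranspose_mul_mulVec [Fintype m] [Fintype n] [CommSemiring R]
    [StarRing R] (A : Matrix m n R) (v : n → R) :
    star v ⬝ᵥ (Aᴴ * A) *ᵥ v = star (A *ᵥ v) ⬝ᵥ A *ᵥ v := by
  rw [← mulVec_mulVec, dotProduct_mulVec, star_mulVec]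

end Matrix

section SecondMoment

variable {𝕜 n Ω : Type*} [RCLike 𝕜] [Fintype n] [MeasurableSpace Ω] {μ : Measure Ω}
  {h : Ω → n → 𝕜} {Φ : Matrix n n 𝕜}

theorem integral_star_dotProduct_mulVec
    (hint : ∀ k l, Integrable (fun ω => h ω k * (starRingEnd 𝕜) (h ω l)) μ)
    (hΦ : ∀ k l, ∫ ω, h ω k * (starRingEnd 𝕜) (h ω l) ∂μ = Φ k l) (G : Matrix n n 𝕜) :
    ∫ ω, star (h ω) ⬝ᵥ G *ᵥ h ω ∂μ = trace (G * Φ) := by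
  have hpt : ∀ ω, star (h ω) ⬝ᵥ G *ᵥ h ω
      = ∑ l, ∑ k, G l k * (h ω k * (starRingEnd 𝕜) (h ω l)) := fun ω => by
    simp only [dotProduct, mulVec, Finset.mul_sum, Pi.star_apply]
    exact Finset.sum_congr rfl fun l _ => Finset.sum_congr rfl fun k _ => by
      rw [RCLike.star_def]; ring
  calc ∫ ω, star (h ω) ⬝ᵥ G *ᵥ h ω ∂μ
      = ∫ ω, ∑ l, ∑ k, G l k * (h ω k * (starRingEnd 𝕜) (h ω l)) ∂μ := by simp only [hpt]
    _ = ∑ l, ∑ k, G l k * Φ k l := by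
      rw [integral_finsetSum (f := fun l ω => ∑ k, G l k * (h ω k * (starRingEnd 𝕜) (h ω l))) _
        fun l _ => integrable_finsetSum _ fun k _ => (hint k l).const_mul _]
      refine Finset.sum_congr rfl fun l _ => ?_
      rw [integral_finsetSum (f := fun k ω => G l k * (h ω k * (starRingEnd 𝕜) (h ω l))) _
        fun k _ => (hint k l).const_mul _]
      simp only [integral_const_mul, hΦ]
    _ = trace (G * Φ) := by simp only [trace, diag_apply, mul_apply]

theorem ofReal_integral_sum_norm_sq_mulVec {m : Type*} [Fintype m]
    (hint : ∀ k l, Integrable (fun ω => h ω k * (starRingEnd 𝕜) (h ω l)) μ)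
    (hΦ : ∀ k l, ∫ ω, h ω k * (starRingEnd 𝕜) (h ω l) ∂μ = Φ k l) (A : Matrix m n 𝕜) :
    ((∫ ω, ∑ i, ‖(A *ᵥ h ω) i‖ ^ 2 ∂μ : ℝ) : 𝕜) = trace (Aᴴ * A * Φ) := by
  rw [← integral_ofReal, ← integral_star_dotProduct_mulVec hint hΦ]
  simp only [ofReal_sum_norm_sq_eq_star_dotProduct, star_dotProduct_conjTranspose_mul_mulVec]

end SecondMoment

theorem bias_of_reduced_rank_estimator_general
    (M : ℕ)
    (Q : Matrix (Fin M) (Fin M) ℂ) (hQ : Qᴴ * Q = 1)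
    (F : Finset (Fin M))
    (QF : Matrix (Fin M) {ℓ : Fin M // ℓ ∈ F} ℂ)
    (hQF : ∀ (i : Fin M) (j : {ℓ : Fin M // ℓ ∈ F}), QF i j = Q i j)
    (W : Matrix (Fin M) (Fin M) ℂ) (hW : Wᴴ * W = 1)
    (P : Matrix (Fin M) (Fin M) ℂ) (hP : P = W * QF * QFᴴ * Wᴴ)
    {Ω : Type*} [MeasurableSpace Ω] (μ : Measure Ω)
    (h : Ω → (Fin M → ℂ))
    (hint : ∀ k l : Fin M,
      Integrable (fun ω => h ω k * (starRingEnd ℂ) (h ω l)) μ)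
    (Φ : Matrix (Fin M) (Fin M) ℂ)
    (hΦ : ∀ k l : Fin M, ∫ ω, h ω k * (starRingEnd ℂ) (h ω l) ∂μ = Φ k l) :
    ((∫ ω, ∑ i, ‖(P *ᵥ h ω - h ω) i‖ ^ 2 ∂μ : ℝ) : ℂ)
      = ∑ ℓ ∈ Fᶜ, (Qᴴ * Wᴴ * Φ * W * Q) ℓ ℓ := by
  set U := W * Q
  set V : Matrix (Fin M) F ℂ := U.submatrix id (↑)
  have hUU : Uᴴ * U = 1 := by
    rw [conjTranspose_mul, Matrix.mul_assoc, ← Matrix.mul_assoc Wᴴ, hW, Matrix.one_mul, hQ]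
  have hVV : Vᴴ * V = 1 := by
    rw [← Matrix.mul_one Vᴴ, ← submatrix_conjTranspose_mul_mul, Matrix.mul_one, hUU,
      submatrix_one _ Subtype.val_injective]
  have hPV : P = V * Vᴴ := by
    have hWQF : W * QF = V := by
      ext i j
      simp only [V, U, mul_apply, hQF, submatrix_apply, id]
    rw [hP, ← hWQF, conjTranspose_mul]
    simp only [Matrix.mul_assoc]
  have hPproj : IsStarProjection P := hPV ▸ isStarProjection_mul_conjTranspose_self hVV
  have hB : Qᴴ * Wᴴ * Φ * W * Q = Uᴴ * Φ * U := by
    simp only [U, conjTranspose_mul, Matrix.mul_assoc]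
  calc ((∫ ω, ∑ i, ‖(P *ᵥ h ω - h ω) i‖ ^ 2 ∂μ : ℝ) : ℂ)
      = ((∫ ω, ∑ i, ‖((P - 1) *ᵥ h ω) i‖ ^ 2 ∂μ : ℝ) : ℂ) := by
        simp only [sub_mulVec, one_mulVec]
    _ = trace ((P - 1)ᴴ * (P - 1) * Φ) := by
        rw [← RCLike.ofReal_eq_complex_ofReal, ofReal_integral_sum_norm_sq_mulVec hint hΦ]
    _ = trace ((1 - P) * Φ) := by
        rw [← star_eq_conjTranspose, hPproj.star_sub_one_mul_sub_one]
    _ = trace (Uᴴ * Φ * U) - trace (Vᴴ * Φ * V) := by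
        rw [sub_mul, Matrix.one_mul, trace_sub,
          trace_conjTranspose_mul_mul_of_mul_conjTranspose_eq_one (mul_eq_one_comm.mp hUU), hPV,
          trace_mul_cycle _ Φ]
    _ = ∑ ℓ ∈ Fᶜ, (Qᴴ * Wᴴ * Φ * W * Q) ℓ ℓ := by
        rw [hB, ← submatrix_conjTranspose_mul_mul, trace_sub_trace_submatrix_val]

/-- Bias of the phase-modulated reduced-rank channel estimator: with `P = W QF QFᴴ Wᴴ`
and `E[h hᴴ] = Φ`, one has `E[‖P h − h‖²] = ∑_{ℓ ∉ F} [Qᴴ Wᴴ Φ W Q]ℓℓ`. -/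
theorem bias_of_reduced_rank_estimator
    (M m : ℕ) (hM : 0 < M) (hm : m ≤ M)
    (Q : Matrix (Fin M) (Fin M) ℂ) (hQ : Qᴴ * Q = 1)
    (F : Finset (Fin M)) (hF : F.card = m)
    (QF : Matrix (Fin M) {ℓ : Fin M // ℓ ∈ F} ℂ)
    (hQF : ∀ (i : Fin M) (j : {ℓ : Fin M // ℓ ∈ F}), QF i j = Q i j)
    (W : Matrix (Fin M) (Fin M) ℂ) (hW : Wᴴ * W = 1)
    (P : Matrix (Fin M) (Fin M) ℂ) (hP : P = W * QF * QFᴴ * Wᴴ)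
    {Ω : Type*} [MeasurableSpace Ω] (μ : Measure Ω) [IsProbabilityMeasure μ]
    (h : Ω → (Fin M → ℂ))
    (hint : ∀ k l : Fin M,
      Integrable (fun ω => h ω k * (starRingEnd ℂ) (h ω l)) μ)
    (Φ : Matrix (Fin M) (Fin M) ℂ)
    (hΦ : ∀ k l : Fin M, ∫ ω, h ω k * (starRingEnd ℂ) (h ω l) ∂μ = Φ k l) :
    ((∫ ω, ∑ i, ‖(P *ᵥ h ω - h ω) i‖ ^ 2 ∂μ : ℝ) : ℂ)
      = ∑ ℓ ∈ Fᶜ, (Qᴴ * Wᴴ * Φ * W * Q) ℓ ℓ :=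
  bias_of_reduced_rank_estimator_general M Q hQ F QF hQF W hW P hP μ h hint Φ hΦ
end

section
/- Fix a positive integer M, a positive real T, and nonnegative reals b₁, …, b_M. For α > 0, a set F ⊆ {1,…,M}, and m = |F|, define f_α(m, F) = m/(T·α) + Σ_{ℓ ∉ F} b_ℓ. Let 0 < α₁ < α₂ and suppose the pair (m₁, F₁) (with |F₁| = m₁) minimizes f_{α₁} over all pairs (m, F) with F ⊆ {1,…,M} and |F| = m, and (m₂, F₂) (with |F₂| = m₂) minimizes f_{α₂} over the same collection. Then m₁ ≤ m₂. -/
open Finset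

theorem le_of_optimal_of_lt_weight {X : Type*} (n r : X → ℝ) {c₁ c₂ : ℝ} (hc : c₂ < c₁)
    {x₁ x₂ : X} (h₁ : c₁ * n x₁ + r x₁ ≤ c₁ * n x₂ + r x₂)
    (h₂ : c₂ * n x₂ + r x₂ ≤ c₂ * n x₁ + r x₁) : n x₁ ≤ n x₂ := by
  have hprod : (c₁ - c₂) * (n x₁ - n x₂) ≤ 0 := by linear_combination h₁ + h₂
  exact sub_nonpos.mp (nonpos_of_mul_nonpos_right hprod (sub_pos.mpr hc))

theorem optimal_order_monotone_in_snr_general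
    (M : ℕ) (T : ℝ) (hT : 0 < T)
    (b : Fin M → ℝ)
    (f : ℝ → Finset (Fin M) → ℝ)
    (hf : ∀ (α : ℝ) (F : Finset (Fin M)),
      f α F = (F.card : ℝ) / (T * α) + ∑ ℓ ∈ Fᶜ, b ℓ)
    (α₁ α₂ : ℝ) (h0 : 0 < α₁) (h12 : α₁ < α₂)
    (F₁ F₂ : Finset (Fin M)) (m₁ m₂ : ℕ)
    (hm₁ : m₁ = F₁.card) (hm₂ : m₂ = F₂.card)
    (hmin₁ : ∀ F : Finset (Fin M), f α₁ F₁ ≤ f α₁ F)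
    (hmin₂ : ∀ F : Finset (Fin M), f α₂ F₂ ≤ f α₂ F) :
    m₁ ≤ m₂ := by
  have hf' (α : ℝ) (F : Finset (Fin M)) : f α F = (T * α)⁻¹ * F.card + ∑ ℓ ∈ Fᶜ, b ℓ := by
    rw [hf, div_eq_inv_mul]
  have hweight : (T * α₂)⁻¹ < (T * α₁)⁻¹ :=
    inv_strictAnti₀ (mul_pos hT h0) (mul_lt_mul_of_pos_left h12 hT)
  have hcard := le_of_optimal_of_lt_weight (fun F : Finset (Fin M) ↦ (F.card : ℝ))
    (fun F ↦ ∑ ℓ ∈ Fᶜ, b ℓ) hweight (x₁ := F₁) (x₂ := F₂)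
    (by simpa only [hf'] using hmin₁ F₂) (by simpa only [hf'] using hmin₂ F₁)
  subst hm₁ hm₂
  exact_mod_cast hcard

/-- The MSE-minimizing modeling order is nondecreasing in the SNR: if `(m₁, F₁)` minimizes
`f_{α₁}(m, F) = m/(Tα₁) + ∑_{ℓ∉F} b_ℓ` and `(m₂, F₂)` minimizes `f_{α₂}` with
`0 < α₁ < α₂`, then `m₁ ≤ m₂`. -/
theorem optimal_order_monotone_in_snr
    (M : ℕ) (hM : 0 < M) (T : ℝ) (hT : 0 < T)
    (b : Fin M → ℝ) (hb : ∀ ℓ, 0 ≤ b ℓ)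
    (f : ℝ → Finset (Fin M) → ℝ)
    (hf : ∀ (α : ℝ) (F : Finset (Fin M)),
      f α F = (F.card : ℝ) / (T * α) + ∑ ℓ ∈ Fᶜ, b ℓ)
    (α₁ α₂ : ℝ) (h0 : 0 < α₁) (h12 : α₁ < α₂)
    (F₁ F₂ : Finset (Fin M)) (m₁ m₂ : ℕ)
    (hm₁ : m₁ = F₁.card) (hm₂ : m₂ = F₂.card)
    (hmin₁ : ∀ F : Finset (Fin M), f α₁ F₁ ≤ f α₁ F)
    (hmin₂ : ∀ F : Finset (Fin M), f α₂ F₂ ≤ f α₂ F) :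
    m₁ ≤ m₂ :=
  optimal_order_monotone_in_snr_general M T hT b f hf α₁ α₂ h0 h12 F₁ F₂ m₁ m₂ hm₁ hm₂ hmin₁ hmin₂
end
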